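/- arXiv:1704.00205 — 2 statements merged into one kernel-verified Lean document; each statement's English description precedes it below -/
import Mathlib

section
/- Forward direction of the 3-SAT reduction: if a 3-SAT instance has a satisfying assignment, then the corresponding QGA instance (as constructed in the reduction) admits a valid assembly query graph Q with cost(Q) = 0. -/
open scoped Classical

/-- A 3-SAT instance: `p` boolean variables and `q` clauses, each clause a
triple of literals (a variable index together with a polarity). -/
structure Sat3 where
  p : ℕ
  q : ℕ
  clauses : Fin q → (Fin p × Bool) × (Fin p × Bool) × (Fin p × Bool)

/-- A literal is satisfied by an assignment. -/
def Sat3.litSat {p : ℕ} (a : Fin p → Bool) (lit : Fin p × Bool) : Prop :=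
  a lit.1 = lit.2

/-- Satisfiability of a 3-SAT instance. -/
def Sat3.Satisfiable (S : Sat3) : Prop :=
  ∃ a : Fin S.p → Bool, ∀ j : Fin S.q,
    Sat3.litSat a (S.clauses j).1 ∨ Sat3.litSat a (S.clauses j).2.1 ∨
      Sat3.litSat a (S.clauses j).2.2

/-- A literal occurs in clause `j`. -/
def Sat3.inClause (S : Sat3) (j : Fin S.q) (lit : Fin S.p × Bool) : Prop :=
  (S.clauses j).1 = lit ∨ (S.clauses j).2.1 = lit ∨ (S.clauses j).2.2 = lit

/-- Vertices of the reduction: literal vertices `u_i`/`¬u_i` and clause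
vertices `c_j`. -/
abbrev RVert (S : Sat3) := (Fin S.p × Bool) ⊕ Fin S.q

/-- Weight of the disengaged edge `e_j` when it connects vertices `v₁, v₂`:
`0` iff it connects the clause vertex `c_j` with a literal vertex occurring in
clause `c_j`, and `1` otherwise. -/
noncomputable def redWeight (S : Sat3) (v₁ v₂ : RVert S) (j : Fin S.q) : ℚ :=
  if (∃ lit, S.inClause j lit ∧
        ((v₁ = Sum.inr j ∧ v₂ = Sum.inl lit) ∨ (v₂ = Sum.inr j ∧ v₁ = Sum.inl lit)))
  then 0 else 1

/-- A valid assembly query graph for the QGA instance constructed from `S`: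
one vertex selected from each vertex set `{u_i, ¬u_i}` and `{c_j}`, and each
of the `q` disengaged edges assigned endpoints among selected vertices. -/
structure RedAssembly (S : Sat3) where
  sv : (Fin S.p ⊕ Fin S.q) → RVert S
  hvar : ∀ i : Fin S.p, sv (Sum.inl i) = Sum.inl (i, true) ∨
    sv (Sum.inl i) = Sum.inl (i, false)
  hcl : ∀ j : Fin S.q, sv (Sum.inr j) = Sum.inr j
  ep : Fin S.q → (Fin S.p ⊕ Fin S.q) × (Fin S.p ⊕ Fin S.q)

/-- The total assembly cost of such a graph. -/
noncomputable def RedAssembly.cost {S : Sat3} (Q : RedAssembly S) : ℚ :=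
  ∑ j, redWeight S (Q.sv (Q.ep j).1) (Q.sv (Q.ep j).2) j

/-- Forward direction of the 3-SAT reduction: if the 3-SAT instance has a
satisfying assignment, then the constructed QGA instance admits a valid
assembly query graph of cost `0`. -/
theorem sat_implies_zero_cost_assembly (S : Sat3) (hsat : S.Satisfiable) :
    ∃ Q : RedAssembly S, Q.cost = 0 := by
  obtain ⟨a, ha⟩ := hsat
  -- choose a satisfied literal in each clause
  have hlit : ∀ j : Fin S.q, ∃ lit : Fin S.p × Bool,
      S.inClause j lit ∧ a lit.1 = lit.2 := by
    intro j
    rcases ha j with h | h | h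
    · exact ⟨(S.clauses j).1, Or.inl rfl, h⟩
    · exact ⟨(S.clauses j).2.1, Or.inr (Or.inl rfl), h⟩
    · exact ⟨(S.clauses j).2.2, Or.inr (Or.inr rfl), h⟩
  choose lit hin hsa using hlit
  refine ⟨⟨fun v => match v with
    | Sum.inl i => Sum.inl (i, a i)
    | Sum.inr j => Sum.inr j,
    fun i => by cases h : a i <;> simp [h],
    fun j => rfl,
    fun j => (Sum.inr j, Sum.inl (lit j).1)⟩, ?_⟩
  unfold RedAssembly.cost
  apply Finset.sum_eq_zero
  intro j _
  simp only [redWeight]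
  rw [if_pos]
  refine ⟨lit j, hin j, Or.inl ⟨?_, ?_⟩⟩
  · trivial
  show Sum.inl ((lit j).1, a (lit j).1) = Sum.inl (lit j)
  rw [hsa j]
end

section
/- Backward direction of the 3-SAT reduction: if the QGA instance constructed from a 3-SAT instance admits a valid assembly query graph with total cost 0, then the 3-SAT instance is satisfiable. -/
open scoped Classical

/-- Backward direction of the 3-SAT reduction: if the QGA instance constructed
from the 3-SAT instance admits a valid assembly query graph of total cost `0`,
then the 3-SAT instance is satisfiable. -/
theorem zero_cost_assembly_implies_sat (S : Sat3)
    (h : ∃ Q : RedAssembly S, Q.cost = 0) : S.Satisfiable := by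

  obtain ⟨Q, hQ⟩ := h
  -- each term is 0
  have hterm : ∀ j : Fin S.q,
      redWeight S (Q.sv (Q.ep j).1) (Q.sv (Q.ep j).2) j = 0 := by
    have hnn : ∀ j ∈ Finset.univ, (0:ℚ) ≤ redWeight S (Q.sv (Q.ep j).1) (Q.sv (Q.ep j).2) j := by
      intro j _
      unfold redWeight
      split <;> norm_num
    intro j
    exact (Finset.sum_eq_zero_iff_of_nonneg hnn).mp hQ j (Finset.mem_univ j)
  -- define assignment
  set a : Fin S.p → Bool := fun i =>
    if Q.sv (Sum.inl i) = Sum.inl (i, true) then true else false with ha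
  have hsv : ∀ i, Q.sv (Sum.inl i) = Sum.inl (i, a i) := by
    intro i
    rcases Q.hvar i with h1 | h1 <;> simp [ha, h1]
  refine ⟨a, fun j => ?_⟩
  have h0 := hterm j
  unfold redWeight at h0
  split at h0
  case isTrue hcond =>
    obtain ⟨lit, hin, hc⟩ := hcond
    -- some endpoint maps to Sum.inl lit
    have hlit : lit = (lit.1, a lit.1) := by
      have : ∃ x, Q.sv x = Sum.inl lit := by
        rcases hc with ⟨_, h2⟩ | ⟨_, h2⟩
        · exact ⟨(Q.ep j).2, h2⟩
        · exact ⟨(Q.ep j).1, h2⟩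
      obtain ⟨x, hx⟩ := this
      rcases x with i | j'
      · rw [hsv i] at hx
        cases hx; rfl
      · rw [Q.hcl j'] at hx
        exact absurd hx (by simp)
    have hsat : Sat3.litSat a lit := by
      rw [hlit]; rfl
    rcases hin with h2 | h2 | h2
    · left; rw [h2]; exact hsat
    · right; left; rw [h2]; exact hsat
    · right; right; rw [h2]; exact hsat
  case isFalse => norm_num at h0
end
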